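/- The set of f ∈ L¹([0,1]) with the property that for every 0 ≤ a < b ≤ 1 there is no Riemann integrable function g on [a,b] with f = g almost everywhere on [a,b], together with 0, contains a closed infinite-dimensional linear subspace of L¹([0,1]) (it is spaceable). -/

import Mathlib

open MeasureTheory Set

/-- Lebesgue measure on `[0,1]`. -/
noncomputable def muI : MeasureTheory.Measure ℝ :=
  MeasureTheory.volume.restrict (Set.Icc 0 1)

/-- Riemann integrability of `g` on `[a,b]`: there is `I ∈ ℝ` such that for every `ε > 0`
there is `δ > 0` such that every tagged partition of `[a,b]` with mesh less than `δ`
has Riemann sum within `ε` of `I`. -/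
def RiemannIntegrableOn (g : ℝ → ℝ) (a b : ℝ) : Prop :=
  ∃ I : ℝ, ∀ ε : ℝ, 0 < ε → ∃ δ : ℝ, 0 < δ ∧
    ∀ (n : ℕ) (x tg : ℕ → ℝ), 0 < n →
      x 0 = a → x n = b →
      (∀ i, i < n → x i < x (i + 1)) →
      (∀ i, i < n → x (i + 1) - x i < δ) →
      (∀ i, i < n → tg i ∈ Set.Icc (x i) (x (i + 1))) →
      |(∑ i ∈ Finset.range n, g (tg i) * (x (i + 1) - x i)) - I| < ε

open scoped ENNReal
lemma RiemannIntegrableOn.bounded {g : ℝ → ℝ} {a b : ℝ} (hab : a < b)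
    (h : RiemannIntegrableOn g a b) : ∃ M : ℝ, ∀ t ∈ Set.Icc a b, |g t| ≤ M := by
  obtain ⟨I, hI⟩ := h
  obtain ⟨δ, hδ, hsum⟩ := hI 1 one_pos
  obtain ⟨n0, hn0⟩ := exists_nat_gt ((b - a) / δ)
  set n : ℕ := n0 + 1 with hn_def
  have hn : 0 < n := Nat.succ_pos _
  have hnR : (0:ℝ) < n := by positivity
  have hnlt : (b - a) / δ < n := lt_of_lt_of_le hn0 (by exact_mod_cast Nat.le_succ n0)
  set Δ : ℝ := (b - a) / n with hΔdef
  have hΔ : 0 < Δ := div_pos (by linarith) hnR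
  have hmesh : Δ < δ := by
    rw [hΔdef, div_lt_iff₀ hnR]
    calc b - a = ((b - a) / δ) * δ := by field_simp
    _ < n * δ := by apply mul_lt_mul_of_pos_right hnlt hδ
    _ = δ * n := by ring
  set x : ℕ → ℝ := fun i => a + i * Δ with hxdef
  have hx0 : x 0 = a := by simp [hxdef]
  have hxn : x n = b := by
    simp only [hxdef, hΔdef]
    field_simp
    ring
  have hstep : ∀ i : ℕ, x (i + 1) - x i = Δ := by
    intro i; simp only [hxdef]; push_cast; ring
  have hmono : ∀ i, i < n → x i < x (i + 1) := by
    intro i _; nlinarith [hstep i]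
  have hmesh' : ∀ i, i < n → x (i + 1) - x i < δ := by
    intro i _; rw [hstep i]; exact hmesh
  have htag0 : ∀ i, i < n → x i ∈ Set.Icc (x i) (x (i + 1)) := by
    intro i hi; exact ⟨le_refl _, by nlinarith [hstep i]⟩
  have hS0 := hsum n x (fun i => x i) hn hx0 hxn hmono hmesh' htag0
  have hne : (Finset.range n).Nonempty := ⟨0, by simp [hn]⟩
  set M0 : ℝ := (Finset.range n).sup' hne (fun i => |g (x i)|) with hM0
  refine ⟨M0 + 2 / Δ, ?_⟩
  intro t ht
  set y : ℝ := (t - a) / Δ with hy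
  have hy0 : 0 ≤ y := div_nonneg (by linarith [ht.1]) hΔ.le
  set i : ℕ := min (n - 1) (⌊y⌋.toNat) with hi_def
  have hi_lt : i < n := lt_of_le_of_lt (min_le_left _ _) (by omega)
  have hxi_le : x i ≤ t := by
    have h1 : (i : ℝ) ≤ y := by
      have : (i : ℕ) ≤ ⌊y⌋.toNat := min_le_right _ _
      have h2 : ((⌊y⌋.toNat : ℤ) : ℝ) ≤ y := by
        rw [Int.toNat_of_nonneg (Int.floor_nonneg.mpr hy0)]
        exact Int.floor_le y
      calc (i:ℝ) ≤ (⌊y⌋.toNat : ℝ) := by exact_mod_cast this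
        _ ≤ y := by exact_mod_cast h2
    have : (i:ℝ) * Δ ≤ y * Δ := mul_le_mul_of_nonneg_right h1 hΔ.le
    have hyΔ : y * Δ = t - a := by
        rw [hy, div_mul_cancel₀ _ hΔ.ne']
    have hxi : x i = a + i * Δ := rfl
    linarith
  have ht_le : t ≤ x (i + 1) := by
    rcases le_or_gt (⌊y⌋.toNat) (n - 1) with hc | hc
    · have hieq : i = ⌊y⌋.toNat := by omega
      have h1 : y < (⌊y⌋.toNat : ℝ) + 1 := by
        rw [show ((⌊y⌋.toNat : ℝ)) = ((⌊y⌋.toNat : ℤ) : ℝ) by push_cast; ring,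
          Int.toNat_of_nonneg (Int.floor_nonneg.mpr hy0)]
        exact Int.lt_floor_add_one y
      have : y * Δ < ((i:ℝ) + 1) * Δ := by
        apply mul_lt_mul_of_pos_right _ hΔ
        rw [hieq]; exact_mod_cast h1
      have hyΔ : y * Δ = t - a := by
        rw [hy, div_mul_cancel₀ _ hΔ.ne']
      have hxi : x (i+1) = a + ((i:ℝ) + 1) * Δ := by show a + _ * Δ = _; push_cast; ring
      linarith
    · have hieq : i = n - 1 := by omega
      have : i + 1 = n := by omega
      rw [this, hxn]; exact ht.2
  set tg1 : ℕ → ℝ := fun i' => if i' = i then t else x i' with htg1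
  have htag1 : ∀ i', i' < n → tg1 i' ∈ Set.Icc (x i') (x (i' + 1)) := by
    intro i' hi'
    simp only [htg1]
    split
    · rename_i he; subst he; exact ⟨hxi_le, ht_le⟩
    · exact htag0 i' hi'
  have hS1 := hsum n x tg1 hn hx0 hxn hmono hmesh' htag1
  have hdiff : (∑ i' ∈ Finset.range n, g (tg1 i') * (x (i' + 1) - x i')) -
      (∑ i' ∈ Finset.range n, g (x i') * (x (i' + 1) - x i')) = (g t - g (x i)) * Δ := by
    rw [← Finset.sum_sub_distrib]
    rw [Finset.sum_eq_single_of_mem i (Finset.mem_range.mpr hi_lt)]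
    · simp only [htg1, if_pos rfl, hstep i]; ring
    · intro i' _ hne'
      simp only [htg1, if_neg hne']; ring
  have habs : |g t - g (x i)| * Δ < 2 := by
    have h1 : |(g t - g (x i)) * Δ| < 2 := by
      rw [← hdiff]
      have hre : (∑ i' ∈ Finset.range n, g (tg1 i') * (x (i' + 1) - x i')) -
          (∑ i' ∈ Finset.range n, g (x i') * (x (i' + 1) - x i')) =
          ((∑ i' ∈ Finset.range n, g (tg1 i') * (x (i' + 1) - x i')) - I) -
          ((∑ i' ∈ Finset.range n, g (x i') * (x (i' + 1) - x i')) - I) := by ring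
      rw [hre]
      calc |_| ≤ |(∑ i' ∈ Finset.range n, g (tg1 i') * (x (i' + 1) - x i')) - I| +
          |(∑ i' ∈ Finset.range n, g (x i') * (x (i' + 1) - x i')) - I| := abs_sub _ _
      _ < 1 + 1 := add_lt_add hS1 hS0
      _ = 2 := by norm_num
    rwa [abs_mul, abs_of_pos hΔ] at h1
  have h2 : |g t - g (x i)| < 2 / Δ := (lt_div_iff₀ hΔ).mpr habs
  have h3 : |g (x i)| ≤ M0 := Finset.le_sup' (fun i => |g (x i)|) (Finset.mem_range.mpr hi_lt)
  have h4 : |g t| - |g (x i)| ≤ |g t - g (x i)| := abs_sub_abs_le_abs_sub _ _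
  linarith


lemma exists_fat (a b : ℝ) (hab : a < b) (ε : ℝ) (hε : 0 < ε) :
    ∃ s : Set ℝ, IsClosed s ∧ interior s = ∅ ∧ s ⊆ Set.Ioo a b ∧
      0 < volume s ∧ volume s ≤ ENNReal.ofReal ε := by
  set b' : ℝ := min b (a + ε) with hb'
  have hab' : a < b' := lt_min hab (by linarith)
  have hb'b : b' ≤ b := min_le_left _ _
  have hb'ε : b' - a ≤ ε := by
    have := min_le_right b (a + ε); simp only [← hb'] at this; linarith
  set c : ℝ := a + (b' - a) / 4 with hc
  set d : ℝ := b' - (b' - a) / 4 with hd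
  have hcd : c < d := by simp only [hc, hd]; linarith
  have hac : a < c := by simp only [hc]; linarith
  have hdb : d < b := by simp only [hd]; linarith
  set δ : ℝ := (d - c) / 8 with hδdef
  have hδ : 0 < δ := by simp only [hδdef]; linarith
  set q : ℕ → ℚ := fun n => (Denumerable.eqv ℚ).symm n with hq
  set U : Set ℝ := ⋃ n : ℕ, Set.Ioo ((q n : ℝ) - δ / 2 ^ n) ((q n : ℝ) + δ / 2 ^ n) with hU
  have hUopen : IsOpen U := isOpen_iUnion fun n => isOpen_Ioo
  refine ⟨Set.Icc c d \ U, ?_, ?_, ?_, ?_, ?_⟩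
  · rw [Set.diff_eq]; exact isClosed_Icc.inter hUopen.isClosed_compl
  · -- no rationals
    have hrat : ∀ r : ℚ, (r : ℝ) ∉ Set.Icc c d \ U := by
      intro r hr
      apply hr.2
      refine Set.mem_iUnion.mpr ⟨Denumerable.eqv ℚ r, ?_⟩
      have : q (Denumerable.eqv ℚ r) = r := by simp [hq]
      rw [this]
      constructor
      · have : (0:ℝ) < δ / 2 ^ (Denumerable.eqv ℚ r) := by positivity
        linarith
      · have : (0:ℝ) < δ / 2 ^ (Denumerable.eqv ℚ r) := by positivity
        linarith
    by_contra hne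
    obtain ⟨x, hx⟩ := Set.nonempty_iff_ne_empty.mpr hne
    obtain ⟨r, hr⟩ := Metric.mem_nhds_iff.mp (mem_interior_iff_mem_nhds.mp hx)
    obtain ⟨p, hp1, hp2⟩ := exists_rat_btwn (show x - r < x + r by linarith [hr.1])
    have : (p:ℝ) ∈ Metric.ball x r := by
      rw [Real.ball_eq_Ioo]; exact ⟨hp1, hp2⟩
    exact hrat p (hr.2 this)
  · intro x hx
    exact ⟨lt_of_lt_of_le hac hx.1.1, lt_of_le_of_lt hx.1.2 hdb⟩
  · -- positive measure
    have hUvol : volume U ≤ ENNReal.ofReal (4 * δ) := by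
      refine le_trans (measure_iUnion_le _) ?_
      have hv : ∀ n : ℕ, volume (Set.Ioo ((q n : ℝ) - δ / 2 ^ n) ((q n : ℝ) + δ / 2 ^ n))
          = ENNReal.ofReal (2 * δ * (1/2) ^ n) := by
        intro n
        rw [Real.volume_Ioo]
        congr 1
        rw [one_div, inv_pow]
        ring
      calc ∑' n : ℕ, volume (Set.Ioo ((q n : ℝ) - δ / 2 ^ n) ((q n : ℝ) + δ / 2 ^ n))
          = ∑' n : ℕ, ENNReal.ofReal (2 * δ * (1/2) ^ n) := by rw [tsum_congr hv]
        _ = ENNReal.ofReal (∑' n : ℕ, 2 * δ * (1/2) ^ n) := by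
            rw [ENNReal.ofReal_tsum_of_nonneg (fun n => by positivity)
              (summable_geometric_two.mul_left _)]
        _ = ENNReal.ofReal (2 * δ * 2) := by rw [tsum_mul_left, tsum_geometric_two]
        _ = ENNReal.ofReal (4 * δ) := by congr 1; ring
        _ ≤ ENNReal.ofReal (4 * δ) := le_rfl
    have hsplit : volume (Set.Icc c d) ≤ volume (Set.Icc c d \ U) + volume U := by
      refine le_trans (measure_mono ?_) (measure_union_le _ _)
      intro x hx
      by_cases hxU : x ∈ U
      · exact Or.inr hxU
      · exact Or.inl ⟨hx, hxU⟩
    rw [Real.volume_Icc] at hsplit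
    by_contra hpos
    push_neg at hpos
    rw [le_zero_iff] at hpos
    rw [hpos, zero_add] at hsplit
    have := le_trans hsplit hUvol
    rw [ENNReal.ofReal_le_ofReal_iff (by positivity)] at this
    simp only [hδdef] at this
    linarith
  · refine le_trans (measure_mono Set.diff_subset) ?_
    rw [Real.volume_Icc]
    apply ENNReal.ofReal_le_ofReal
    simp only [hd, hc]; linarith



lemma nwd_union {s t : Set ℝ} (hs : IsClosed s) (hs' : interior s = ∅)
    (ht : IsClosed t) (ht' : interior t = ∅) : interior (s ∪ t) = ∅ := by
  rw [interior_eq_empty_iff_dense_compl] at *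
  rw [Set.compl_union]
  exact hs'.inter_of_isOpen_left ht' hs.isOpen_compl

lemma nwd_finset_union (t : Finset ℕ) (D : ℕ → Set ℝ)
    (h : ∀ i ∈ t, IsClosed (D i) ∧ interior (D i) = ∅) :
    IsClosed (⋃ i ∈ t, D i) ∧ interior (⋃ i ∈ t, D i) = ∅ := by
  classical
  induction t using Finset.induction with
  | empty => simp
  | @insert a t hna ih =>
    rw [Finset.set_biUnion_insert]
    have h1 := h a (Finset.mem_insert_self a t)
    have h2 := ih (fun i hi => h i (Finset.mem_insert_of_mem hi))
    exact ⟨h1.1.union h2.1, nwd_union h1.1 h1.2 h2.1 h2.2⟩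

/-- enumeration of rational subintervals of (0,1) -/
noncomputable def Rseq : ℕ → ℝ × ℝ := fun k =>
  if 0 < ((((Denumerable.eqv (ℚ × ℚ)).symm k).1 : ℚ) : ℝ) ∧
      ((((Denumerable.eqv (ℚ × ℚ)).symm k).1 : ℚ) : ℝ) < ((((Denumerable.eqv (ℚ × ℚ)).symm k).2 : ℚ) : ℝ) ∧
      ((((Denumerable.eqv (ℚ × ℚ)).symm k).2 : ℚ) : ℝ) < 1 then
    (((((Denumerable.eqv (ℚ × ℚ)).symm k).1 : ℚ) : ℝ), ((((Denumerable.eqv (ℚ × ℚ)).symm k).2 : ℚ) : ℝ))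
  else (1/3, 1/2)

lemma Rseq_mem (k : ℕ) : 0 < (Rseq k).1 ∧ (Rseq k).1 < (Rseq k).2 ∧ (Rseq k).2 < 1 := by
  unfold Rseq
  split
  · assumption
  · norm_num

lemma Rseq_dense {a b : ℝ} (ha : 0 ≤ a) (hab : a < b) (hb : b ≤ 1) :
    ∃ k : ℕ, a < (Rseq k).1 ∧ (Rseq k).2 < b := by
  obtain ⟨p1, hp1, hp1'⟩ := exists_rat_btwn hab
  obtain ⟨p2, hp2, hp2'⟩ := exists_rat_btwn hp1'
  refine ⟨Denumerable.eqv (ℚ × ℚ) (p1, p2), ?_⟩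
  unfold Rseq
  simp only [Equiv.symm_apply_apply]
  rw [if_pos ⟨lt_of_le_of_lt ha hp1, by exact_mod_cast hp2, lt_of_lt_of_le hp2' hb⟩]
  exact ⟨hp1, hp2'⟩

/-- index decoding -/
noncomputable def idx : ℕ ≃ ℕ × ℕ × ℕ := (Denumerable.eqv (ℕ × ℕ × ℕ)).symm
noncomputable def kidx (j : ℕ) : ℕ := (idx j).1
noncomputable def nidx (j : ℕ) : ℕ := (idx j).2.1
noncomputable def midx (j : ℕ) : ℕ := (idx j).2.2

lemma step_exists (j : ℕ) (prev : ∀ i, i < j → Set ℝ) :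
    ∃ s : Set ℝ, IsClosed s ∧ interior s = ∅ ∧
      s ⊆ Set.Ioo (Rseq (kidx j)).1 (Rseq (kidx j)).2 ∧
      0 < volume s ∧ volume s ≤ ENNReal.ofReal ((1/2) ^ j / (midx j + 1)) ∧
      ∀ i (h : i < j), IsClosed (prev i h) → interior (prev i h) = ∅ →
        Disjoint (prev i h) s := by
  classical
  set D : ℕ → Set ℝ := fun i =>
    if h : i < j then
      (if IsClosed (prev i h) ∧ interior (prev i h) = ∅ then prev i h else ∅)
    else ∅ with hD
  have hDgood : ∀ i ∈ Finset.range j, IsClosed (D i) ∧ interior (D i) = ∅ := by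
    intro i _
    simp only [hD]
    split
    · split
      · rename_i h h'; exact h'
      · simp
    · simp
  set U : Set ℝ := ⋃ i ∈ Finset.range j, D i with hU
  obtain ⟨hUclosed, hUnwd⟩ := nwd_finset_union _ _ hDgood
  obtain ⟨hR1, hR12, hR2⟩ := Rseq_mem (kidx j)
  set V : Set ℝ := Set.Ioo (Rseq (kidx j)).1 (Rseq (kidx j)).2 \ U with hV
  have hVopen : IsOpen V := isOpen_Ioo.sdiff hUclosed
  have hVne : V.Nonempty := by
    by_contra hne
    rw [Set.not_nonempty_iff_eq_empty, Set.diff_eq_empty] at hne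
    have : Set.Ioo (Rseq (kidx j)).1 (Rseq (kidx j)).2 ⊆ interior U :=
      interior_maximal hne isOpen_Ioo
    rw [hUnwd] at this
    exact Set.not_nonempty_empty (this.antisymm (Set.empty_subset _) ▸ Set.nonempty_Ioo.mpr hR12)
  obtain ⟨x, hx⟩ := hVne
  obtain ⟨r, hr0, hball⟩ := Metric.isOpen_iff.mp hVopen x hx
  have hIooball : Set.Ioo (x - r) (x + r) ⊆ V := by rw [← Real.ball_eq_Ioo]; exact hball
  obtain ⟨s, hs1, hs2, hs3, hs4, hs5⟩ :=
    exists_fat (x - r) (x + r) (by linarith) ((1/2) ^ j / (midx j + 1)) (by positivity)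
  refine ⟨s, hs1, hs2, fun y hy => ((hIooball (hs3 hy)).1 : _), hs4, hs5, ?_⟩
  intro i h hc hn
  rw [Set.disjoint_left]
  intro y hyp hys
  have hyU : y ∈ U := by
    apply Set.mem_biUnion (Finset.mem_range.mpr h)
    simp only [hD]
    rw [dif_pos h, if_pos ⟨hc, hn⟩]
    exact hyp
  exact (hIooball (hs3 hys)).2 hyU

noncomputable def Kf (j : ℕ) : Set ℝ :=
  Nat.strongRecOn' (motive := fun _ => Set ℝ) (fun j ih => Classical.choose (step_exists j (fun i hi => ih i hi))) j

lemma Kf_def (j : ℕ) : Kf j = Classical.choose (step_exists j (fun i _ => Kf i)) := by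
  show Nat.strongRecOn' (motive := fun _ => Set ℝ) _ j = _
  rw [Nat.strongRecOn', Nat.strongRecOn'_beta]
  rfl

lemma Kf_closed (j : ℕ) : IsClosed (Kf j) := by
  rw [Kf_def]; exact (Classical.choose_spec (step_exists j (fun i _ => Kf i))).1

lemma Kf_nwd (j : ℕ) : interior (Kf j) = ∅ := by
  rw [Kf_def]; exact (Classical.choose_spec (step_exists j (fun i _ => Kf i))).2.1

lemma Kf_subset (j : ℕ) : Kf j ⊆ Set.Ioo (Rseq (kidx j)).1 (Rseq (kidx j)).2 := by
  rw [Kf_def]; exact (Classical.choose_spec (step_exists j (fun i _ => Kf i))).2.2.1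

lemma Kf_pos (j : ℕ) : 0 < volume (Kf j) := by
  rw [Kf_def]; exact (Classical.choose_spec (step_exists j (fun i _ => Kf i))).2.2.2.1

lemma Kf_vol (j : ℕ) : volume (Kf j) ≤ ENNReal.ofReal ((1/2) ^ j / (midx j + 1)) := by
  rw [Kf_def]; exact (Classical.choose_spec (step_exists j (fun i _ => Kf i))).2.2.2.2.1

lemma Kf_disj {i j : ℕ} (h : i < j) : Disjoint (Kf i) (Kf j) := by
  conv_rhs => rw [Kf_def]
  exact (Classical.choose_spec (step_exists j (fun i _ => Kf i))).2.2.2.2.2 i h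
    (Kf_closed i) (Kf_nwd i)

lemma Kf_disj' {i j : ℕ} (h : i ≠ j) : Disjoint (Kf i) (Kf j) := by
  rcases h.lt_or_gt with h | h
  · exact Kf_disj h
  · exact (Kf_disj h).symm



lemma Kf_sub_unit (j : ℕ) : Kf j ⊆ Set.Icc 0 1 := by
  intro x hx
  have h := Kf_subset j hx
  have h0 := (Rseq_mem (kidx j)).1
  have h2 := (Rseq_mem (kidx j)).2.2
  exact ⟨by linarith [h.1], by linarith [h.2]⟩

lemma muI_Kf (j : ℕ) : muI (Kf j) = volume (Kf j) := by
  rw [muI, Measure.restrict_apply' measurableSet_Icc, Set.inter_eq_left.mpr (Kf_sub_unit j)]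

lemma muI_Kf_pos (j : ℕ) : 0 < muI (Kf j) := by rw [muI_Kf]; exact Kf_pos j

lemma muI_Kf_ne_top (j : ℕ) : muI (Kf j) ≠ ⊤ := by
  rw [muI_Kf]
  exact ne_top_of_le_ne_top ENNReal.ofReal_ne_top (Kf_vol j)

noncomputable def vI (j : ℕ) : ℝ := (midx j : ℝ) + 1
lemma vI_pos (j : ℕ) : 0 < vI j := by unfold vI; positivity
noncomputable def volR (j : ℕ) : ℝ := (muI (Kf j)).toReal
lemma volR_pos (j : ℕ) : 0 < volR j :=
  ENNReal.toReal_pos (ne_of_gt (muI_Kf_pos j)) (muI_Kf_ne_top j)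

noncomputable def Fn (n : ℕ) : ℝ → ℝ≥0∞ := fun x =>
  ∑' j : ℕ, Set.indicator (Kf j) (fun _ => if nidx j = n then ((midx j : ℝ≥0∞) + 1) else 0) x

lemma Fn_measurable (n : ℕ) : Measurable (Fn n) := by
  apply Measurable.ennreal_tsum
  intro j
  exact measurable_const.indicator (Kf_closed j).measurableSet

lemma Fn_of_mem {n j : ℕ} {x : ℝ} (hx : x ∈ Kf j) :
    Fn n x = if nidx j = n then ((midx j : ℝ≥0∞) + 1) else 0 := by
  unfold Fn
  rw [tsum_eq_single j]
  · rw [Set.indicator_of_mem hx]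
  · intro j' hj'
    rw [Set.indicator_of_notMem]
    exact fun hx' => (Set.disjoint_left.mp (Kf_disj' hj') hx') hx

lemma Fn_of_not_mem {n : ℕ} {x : ℝ} (hx : x ∉ ⋃ j, Kf j) : Fn n x = 0 := by
  unfold Fn
  convert tsum_zero with j
  rw [Set.indicator_of_notMem (fun h => hx (Set.mem_iUnion.mpr ⟨j, h⟩))]

noncomputable def fn (n : ℕ) : ℝ → ℝ := fun x => (Fn n x).toReal

lemma fn_of_mem {n j : ℕ} {x : ℝ} (hx : x ∈ Kf j) :
    fn n x = if nidx j = n then vI j else 0 := by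
  unfold fn
  rw [Fn_of_mem hx]
  split
  · rw [vI]; rw [ENNReal.toReal_add (by simp) (by simp)]; simp
  · simp

lemma fn_of_not_mem {n : ℕ} {x : ℝ} (hx : x ∉ ⋃ j, Kf j) : fn n x = 0 := by
  unfold fn; rw [Fn_of_not_mem hx]; simp

lemma Fn_lintegral (n : ℕ) : ∫⁻ x, Fn n x ∂muI ≠ ⊤ := by
  have h1 : ∫⁻ x, Fn n x ∂muI = ∑' j : ℕ, ∫⁻ x,
      Set.indicator (Kf j) (fun _ => if nidx j = n then ((midx j : ℝ≥0∞) + 1) else 0) x ∂muI := by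
    unfold Fn
    exact lintegral_tsum fun j => (measurable_const.indicator (Kf_closed j).measurableSet).aemeasurable
  rw [h1]
  have hterm : ∀ j : ℕ, (∫⁻ x, Set.indicator (Kf j)
      (fun _ => if nidx j = n then ((midx j : ℝ≥0∞) + 1) else 0) x ∂muI)
      ≤ ENNReal.ofReal ((1/2) ^ j) := by
    intro j
    rw [lintegral_indicator_const (Kf_closed j).measurableSet]
    have hb : muI (Kf j) ≤ ENNReal.ofReal ((1/2) ^ j / (midx j + 1)) := by
      rw [muI_Kf]; exact Kf_vol j
    calc (if nidx j = n then ((midx j : ℝ≥0∞) + 1) else 0) * muI (Kf j)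
        ≤ ((midx j : ℝ≥0∞) + 1) * ENNReal.ofReal ((1/2) ^ j / (midx j + 1)) := by
          apply mul_le_mul' _ hb
          split
          · exact le_rfl
          · exact zero_le
      _ = ENNReal.ofReal ((1/2) ^ j) := by
          rw [show ((midx j : ℝ≥0∞) + 1) = ENNReal.ofReal ((midx j : ℝ) + 1) by
            rw [ENNReal.ofReal_add (by positivity) zero_le_one]; simp]
          rw [← ENNReal.ofReal_mul (by positivity)]
          congr 1
          field_simp
  refine ne_top_of_le_ne_top ?_ (ENNReal.tsum_le_tsum hterm)
  rw [← ENNReal.ofReal_tsum_of_nonneg (fun j => by positivity)]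
  · exact ENNReal.ofReal_ne_top
  · exact summable_geometric_two

lemma fn_integrable (n : ℕ) : Integrable (fn n) muI :=
  integrable_toReal_of_lintegral_ne_top (Fn_measurable n).aemeasurable (Fn_lintegral n)

noncomputable def FLp (n : ℕ) : Lp ℝ 1 muI :=
  (memLp_one_iff_integrable.mpr (fn_integrable n)).toLp (fn n)

lemma FLp_coe (n : ℕ) : (FLp n : ℝ → ℝ) =ᵐ[muI] fn n :=
  MemLp.coeFn_toLp _

def Scar : Set (Lp ℝ 1 muI) :=
  {f | ∃ c : ℕ → ℝ,
    (∀ j : ℕ, ∀ᵐ x ∂muI, x ∈ Kf j → f x = c (nidx j) * vI j) ∧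
    (∀ᵐ x ∂muI, x ∉ (⋃ j, Kf j) → f x = 0)}

noncomputable def Ssub : Submodule ℝ (Lp ℝ 1 muI) where
  carrier := Scar
  zero_mem' := by
    refine ⟨0, fun j => ?_, ?_⟩
    · filter_upwards [Lp.coeFn_zero ℝ 1 muI] with x hx
      intro _; rw [hx]; simp
    · filter_upwards [Lp.coeFn_zero ℝ 1 muI] with x hx
      intro _; rw [hx]; simp
  add_mem' := by
    rintro f g ⟨c, hc1, hc2⟩ ⟨d, hd1, hd2⟩
    refine ⟨c + d, fun j => ?_, ?_⟩
    · filter_upwards [hc1 j, hd1 j, Lp.coeFn_add f g] with x h1 h2 h3 hx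
      rw [h3]; simp only [Pi.add_apply, h1 hx, h2 hx]; ring
    · filter_upwards [hc2, hd2, Lp.coeFn_add f g] with x h1 h2 h3 hx
      rw [h3]; simp only [Pi.add_apply, h1 hx, h2 hx]; ring
  smul_mem' := by
    rintro r f ⟨c, hc1, hc2⟩
    refine ⟨r • c, fun j => ?_, ?_⟩
    · filter_upwards [hc1 j, Lp.coeFn_smul r f] with x h1 h3 hx
      rw [h3]; simp only [Pi.smul_apply, smul_eq_mul, h1 hx]; ring
    · filter_upwards [hc2, Lp.coeFn_smul r f] with x h1 h3 hx
      rw [h3]; simp only [Pi.smul_apply, smul_eq_mul, h1 hx]; ring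

lemma FLp_mem (n : ℕ) : FLp n ∈ Scar := by
  refine ⟨fun n' => if n' = n then 1 else 0, fun j => ?_, ?_⟩
  · filter_upwards [FLp_coe n] with x hx hmem
    rw [hx, fn_of_mem hmem]
    by_cases h : nidx j = n
    · simp [h]
    · simp [h]
  · filter_upwards [FLp_coe n] with x hx hmem
    rw [hx, fn_of_not_mem hmem]

-- integral comparison lemmas
lemma setIntegral_abs_sub_le (h1 h2 : Lp ℝ 1 muI) (s : Set ℝ) :
    ∫ x in s, |h1 x - h2 x| ∂muI ≤ dist h1 h2 := by
  have hint : Integrable (fun x => h1 x - h2 x) muI :=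
    (L1.integrable_coeFn h1).sub (L1.integrable_coeFn h2)
  calc ∫ x in s, |h1 x - h2 x| ∂muI ≤ ∫ x, |h1 x - h2 x| ∂muI := by
        apply setIntegral_le_integral hint.abs
        filter_upwards with x
        exact abs_nonneg _
    _ = ‖h1 - h2‖ := by
        rw [L1.norm_eq_integral_norm]
        apply integral_congr_ae
        filter_upwards [Lp.coeFn_sub h1 h2] with x hx
        rw [hx]; simp
    _ = dist h1 h2 := (dist_eq_norm _ _).symm

lemma abs_setIntegral_sub_le (h1 h2 : Lp ℝ 1 muI) (s : Set ℝ) :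
    |(∫ x in s, h1 x ∂muI) - ∫ x in s, h2 x ∂muI| ≤ dist h1 h2 := by
  rw [← integral_sub ((L1.integrable_coeFn h1).restrict) ((L1.integrable_coeFn h2).restrict)]
  calc |∫ x in s, (h1 x - h2 x) ∂muI| ≤ ∫ x in s, |h1 x - h2 x| ∂muI := by
        simpa using norm_integral_le_integral_norm (μ := muI.restrict s) (fun x => h1 x - h2 x)
    _ ≤ dist h1 h2 := setIntegral_abs_sub_le h1 h2 s

lemma int_of_mem (h : Lp ℝ 1 muI) {c : ℕ → ℝ} (j : ℕ)
    (hc : ∀ᵐ x ∂muI, x ∈ Kf j → h x = c (nidx j) * vI j) :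
    ∫ x in Kf j, h x ∂muI = c (nidx j) * vI j * volR j := by
  rw [setIntegral_congr_ae (Kf_closed j).measurableSet
    (by filter_upwards [hc] with x hx; exact hx)]
  rw [setIntegral_const, volR, smul_eq_mul]
  rw [measureReal_def]; ring

set_option synthInstance.maxHeartbeats 1000000 in
lemma Scar_closed : IsClosed Scar := by
  refine IsSeqClosed.isClosed ?_
  intro u f hu hf
  choose c hc1 hc2 using hu
  have hdist : Filter.Tendsto (fun i => dist (u i) f) Filter.atTop (nhds 0) :=
    tendsto_iff_dist_tendsto_zero.mp hf
  set jn : ℕ → ℕ := fun n => idx.symm (0, n, 0) with hjn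
  have hjn_n : ∀ n, nidx (jn n) = n := by
    intro n
    have h : idx (jn n) = (0, n, 0) := Equiv.apply_symm_apply idx _
    rw [nidx, h]
  set den : ℕ → ℝ := fun n => vI (jn n) * volR (jn n) with hden_def
  have hden : ∀ n, 0 < den n := fun n => mul_pos (vI_pos _) (volR_pos _)
  set cl : ℕ → ℝ := fun n => (∫ x in Kf (jn n), f x ∂muI) / den n with hcl
  have hci : ∀ i n, c i n = (∫ x in Kf (jn n), (u i) x ∂muI) / den n := by
    intro i n
    rw [int_of_mem (u i) (jn n) (hc1 i (jn n)), hjn_n n, hden_def]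
    rw [mul_assoc, mul_div_assoc, div_self (mul_pos (vI_pos (jn n)) (volR_pos (jn n))).ne', mul_one]
  have htend : ∀ n, Filter.Tendsto (fun i => c i n) Filter.atTop (nhds (cl n)) := by
    intro n
    rw [tendsto_iff_dist_tendsto_zero]
    have hb : ∀ i, dist (c i n) (cl n) ≤ dist (u i) f / den n := by
      intro i
      rw [hci i n, hcl, Real.dist_eq, div_sub_div_same, abs_div, abs_of_pos (hden n)]
      rw [div_le_div_iff_of_pos_right (hden n)]
      exact abs_setIntegral_sub_le (u i) f (Kf (jn n))
    refine tendsto_of_tendsto_of_tendsto_of_le_of_le tendsto_const_nhds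
      (by simpa using hdist.div_const (den n)) (fun i => dist_nonneg) hb
  refine ⟨cl, fun j => ?_, ?_⟩
  · set L := cl (nidx j) * vI j with hL
    have hIf : Integrable (fun x => f x - L) (muI.restrict (Kf j)) :=
      ((L1.integrable_coeFn f).restrict).sub
        (integrableOn_const (muI_Kf_ne_top j))
    have hE : ∀ i, ∫ x in Kf j, |f x - L| ∂muI ≤
        dist (u i) f + |c i (nidx j) - cl (nidx j)| * vI j * volR j := by
      intro i
      have hIfu : Integrable (fun x => |f x - (u i) x|) (muI.restrict (Kf j)) :=
        (((L1.integrable_coeFn f).restrict).sub ((L1.integrable_coeFn (u i)).restrict)).abs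
      have hIuL : Integrable (fun x => |(u i) x - L|) (muI.restrict (Kf j)) :=
        (((L1.integrable_coeFn (u i)).restrict).sub
          (integrableOn_const (muI_Kf_ne_top j))).abs
      calc ∫ x in Kf j, |f x - L| ∂muI
          ≤ ∫ x in Kf j, (|f x - (u i) x| + |(u i) x - L|) ∂muI := by
            refine integral_mono hIf.abs (hIfu.add hIuL) ?_
            intro x
            exact abs_sub_le _ _ _
        _ = (∫ x in Kf j, |f x - (u i) x| ∂muI) + ∫ x in Kf j, |(u i) x - L| ∂muI :=
            integral_add hIfu hIuL
        _ ≤ dist (u i) f + |c i (nidx j) - cl (nidx j)| * vI j * volR j := by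
            gcongr
            · rw [dist_comm]; exact setIntegral_abs_sub_le f (u i) (Kf j)
            · have heq : ∫ x in Kf j, |(u i) x - L| ∂muI
                  = |c i (nidx j) * vI j - L| * volR j := by
                rw [setIntegral_congr_ae (Kf_closed j).measurableSet
                  (g := fun _ => |c i (nidx j) * vI j - L|)
                  (by filter_upwards [hc1 i j] with x hx hm; rw [hx hm])]
                rw [setIntegral_const, volR, smul_eq_mul, measureReal_def]; ring
              rw [heq, hL]
              rw [show c i (nidx j) * vI j - cl (nidx j) * vI j
                  = (c i (nidx j) - cl (nidx j)) * vI j by ring]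
              rw [abs_mul, abs_of_pos (vI_pos j)]
    have hE0 : ∫ x in Kf j, |f x - L| ∂muI = 0 := by
      have h2 : Filter.Tendsto (fun i => |c i (nidx j) - cl (nidx j)|) Filter.atTop (nhds 0) := by
        have h3 := (htend (nidx j)).sub_const (cl (nidx j))
        simp only [sub_self] at h3
        simpa using h3.abs
      have h1 : Filter.Tendsto (fun i =>
          dist (u i) f + |c i (nidx j) - cl (nidx j)| * vI j * volR j)
          Filter.atTop (nhds 0) := by
        have := hdist.add ((h2.mul_const (vI j)).mul_const (volR j))
        simpa using this
      exact le_antisymm (ge_of_tendsto' h1 hE) (integral_nonneg fun x => abs_nonneg _)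
    have habs : (fun x => |f x - L|) =ᵐ[muI.restrict (Kf j)] 0 :=
      (integral_eq_zero_iff_of_nonneg_ae
        (Filter.Eventually.of_forall fun x => abs_nonneg _) hIf.abs).mp hE0
    have hres := (ae_restrict_iff' (Kf_closed j).measurableSet).mp habs
    filter_upwards [hres] with x hx hm
    have h4 := hx hm
    simp only [Pi.zero_apply, abs_eq_zero, sub_eq_zero] at h4
    exact h4
  · set Z := (⋃ j, Kf j)ᶜ with hZ
    have hZm : MeasurableSet Z := (MeasurableSet.iUnion (fun j => (Kf_closed j).measurableSet)).compl
    have hIf : Integrable (fun x => |f x|) (muI.restrict Z) := ((L1.integrable_coeFn f).restrict).abs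
    have hE : ∀ i, ∫ x in Z, |f x| ∂muI ≤ dist (u i) f := by
      intro i
      calc ∫ x in Z, |f x| ∂muI = ∫ x in Z, |f x - (u i) x| ∂muI := by
            apply setIntegral_congr_ae hZm
            filter_upwards [hc2 i] with x hx hm
            rw [hx (Set.mem_compl_iff _ _ |>.mp hm), sub_zero]
        _ ≤ dist f (u i) := setIntegral_abs_sub_le f (u i) Z
        _ = dist (u i) f := dist_comm _ _
    have hE0 : ∫ x in Z, |f x| ∂muI = 0 :=
      le_antisymm (ge_of_tendsto' hdist hE) (integral_nonneg fun x => abs_nonneg _)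
    have habs : (fun x => |f x|) =ᵐ[muI.restrict Z] 0 :=
      (integral_eq_zero_iff_of_nonneg_ae
        (Filter.Eventually.of_forall fun x => abs_nonneg _) hIf).mp hE0
    have hres := (ae_restrict_iff' hZm).mp habs
    filter_upwards [hres] with x hx hm
    have h4 := hx (Set.mem_compl_iff _ _ |>.mpr hm)
    simpa using h4

lemma exists_point (j : ℕ) {P : ℝ → Prop} (hP : ∀ᵐ x ∂muI, P x) : ∃ x ∈ Kf j, P x := by
  by_contra h
  push_neg at h
  have h0 : muI {x | ¬ P x} = 0 := ae_iff.mp hP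
  have hsub : Kf j ⊆ {x | ¬ P x} := fun x hx => h x hx
  exact absurd (le_antisymm ((measure_mono hsub).trans h0.le) (zero_le))
    (ne_of_gt (muI_Kf_pos j))

lemma coeFn_sum_ae (s : Finset ℕ) (g : ℕ → ℝ) :
    (↑↑(∑ i ∈ s, g i • FLp i) : ℝ → ℝ) =ᵐ[muI] fun x => ∑ i ∈ s, g i * fn i x := by
  classical
  induction s using Finset.induction with
  | empty =>
      simp only [Finset.sum_empty]
      filter_upwards [Lp.coeFn_zero ℝ 1 muI] with x hx
      rw [hx]; simp
  | @insert a t ha ih =>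
      rw [Finset.sum_insert ha]
      filter_upwards [Lp.coeFn_add (g a • FLp a) (∑ i ∈ t, g i • FLp i),
        Lp.coeFn_smul (g a) (FLp a), ih, FLp_coe a] with x h1 h2 h3 h4
      rw [h1]
      simp only [Pi.add_apply]
      rw [h2, h3]
      simp only [Pi.smul_apply, smul_eq_mul, Finset.sum_insert ha, h4]

lemma FLp_li : LinearIndependent ℝ FLp := by
  rw [linearIndependent_iff']
  intro s g hsum n hn
  have hz : (↑↑(0 : Lp ℝ 1 muI) : ℝ → ℝ) =ᵐ[muI] fun x => ∑ i ∈ s, g i * fn i x := by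
    rw [← hsum]; exact coeFn_sum_ae s g
  have hae : ∀ᵐ x ∂muI, ∑ i ∈ s, g i * fn i x = 0 := by
    filter_upwards [hz, Lp.coeFn_zero ℝ 1 muI] with x h1 h2
    rw [← h1, h2]
    simp
  set j := idx.symm (0, n, 0) with hj
  have hidx : idx j = (0, n, 0) := Equiv.apply_symm_apply idx _
  obtain ⟨x, hxK, hx0⟩ := exists_point j hae
  have hv : vI j = 1 := by rw [vI, midx, hidx]; norm_num
  have hfn : ∀ i, fn i x = if i = n then 1 else 0 := by
    intro i
    rw [fn_of_mem hxK, nidx, hidx, hv]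
    by_cases h : n = i
    · simp [h]
    · simp [h, Ne.symm h]
  rw [Finset.sum_congr rfl (fun i _ => by rw [hfn i])] at hx0
  simp only [mul_ite, mul_one, mul_zero, Finset.sum_ite_eq', hn, if_pos] at hx0
  exact hx0

lemma Ssub_infdim : ¬ FiniteDimensional ℝ Ssub := by
  intro hFD
  have li : LinearIndependent ℝ (fun n => (⟨FLp n, FLp_mem n⟩ : Ssub)) := by
    apply LinearIndependent.of_comp (Ssub.subtype)
    convert FLp_li
    rfl
  have hcard := li.lt_aleph0_of_finiteDimensional
  rw [Cardinal.mk_nat] at hcard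
  exact absurd hcard (lt_irrefl _)

lemma Ssub_spikes (f : Lp ℝ 1 muI) (hfS : f ∈ Ssub) (hf0 : f ≠ 0)
    (a b : ℝ) (ha : 0 ≤ a) (hab : a < b) (hb : b ≤ 1) :
    ¬ ∃ g : ℝ → ℝ, RiemannIntegrableOn g a b ∧
      (∀ᵐ x ∂(volume.restrict (Set.Icc a b)), (f : ℝ → ℝ) x = g x) := by
  rintro ⟨g, hgR, hae⟩
  obtain ⟨c, hc1, hc2⟩ := hfS
  have hex : ∃ n, c n ≠ 0 := by
    by_contra h
    push_neg at h
    apply hf0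
    rw [Lp.eq_zero_iff_ae_eq_zero]
    have hall : ∀ᵐ x ∂muI, ∀ j, x ∈ Kf j → (f : ℝ → ℝ) x = c (nidx j) * vI j := ae_all_iff.mpr hc1
    filter_upwards [hall, hc2] with x h1 h2
    by_cases hx : x ∈ ⋃ j, Kf j
    · obtain ⟨j, hj⟩ := Set.mem_iUnion.mp hx
      rw [h1 j hj, h]
      simp
    · rw [h2 hx]
      simp
  obtain ⟨n, hcn⟩ := hex
  obtain ⟨M, hM⟩ := hgR.bounded hab
  obtain ⟨k, hk1, hk2⟩ := Rseq_dense ha hab hb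
  obtain ⟨m0, hm0⟩ := exists_nat_gt (M / |c n|)
  set j := idx.symm (k, n, m0) with hj
  have hidx : idx j = (k, n, m0) := Equiv.apply_symm_apply idx _
  have hkj : kidx j = k := by rw [kidx, hidx]
  have hnj : nidx j = n := by rw [nidx, hidx]
  have hmj : midx j = m0 := by rw [midx, hidx]
  have hKab : Kf j ⊆ Set.Icc a b := by
    intro x hx
    have h := Kf_subset j hx
    rw [hkj] at h
    exact ⟨le_of_lt (lt_trans hk1 h.1), le_of_lt (lt_trans h.2 hk2)⟩
  have hb1 : muI {x | ¬ (x ∈ Kf j → (f : ℝ → ℝ) x = c (nidx j) * vI j)} = 0 := ae_iff.mp (hc1 j)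
  have hb2 : (volume.restrict (Set.Icc a b)) {x | ¬ ((f : ℝ → ℝ) x = g x)} = 0 := ae_iff.mp hae
  have hb1' : volume ({x | ¬ (x ∈ Kf j → (f : ℝ → ℝ) x = c (nidx j) * vI j)} ∩ Set.Icc 0 1) = 0 :=
    (Measure.restrict_apply' measurableSet_Icc).symm.trans hb1
  have hb2' : volume ({x | ¬ ((f : ℝ → ℝ) x = g x)} ∩ Set.Icc a b) = 0 :=
    (Measure.restrict_apply' measurableSet_Icc).symm.trans hb2
  set B := ({x | ¬ (x ∈ Kf j → (f : ℝ → ℝ) x = c (nidx j) * vI j)} ∩ Set.Icc 0 1) ∪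
    ({x | ¬ ((f : ℝ → ℝ) x = g x)} ∩ Set.Icc a b) with hB
  have hBvol : volume B = 0 :=
    le_antisymm ((measure_union_le _ _).trans (by rw [hb1', hb2']; simp)) (zero_le)
  have hKB : ¬ Kf j ⊆ B := by
    intro hsub
    exact absurd (le_antisymm ((measure_mono hsub).trans hBvol.le) (zero_le))
      (ne_of_gt (Kf_pos j))
  obtain ⟨x, hxK, hxB⟩ := Set.not_subset.mp hKB
  have hx01 : x ∈ Set.Icc 0 1 := Kf_sub_unit j hxK
  have hxab : x ∈ Set.Icc a b := hKab hxK
  have hfx : (f : ℝ → ℝ) x = c n * vI j := by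
    have h1 : x ∉ ({x | ¬ (x ∈ Kf j → (f : ℝ → ℝ) x = c (nidx j) * vI j)} ∩ Set.Icc 0 1) :=
      fun h => hxB (Set.mem_union_left _ h)
    have h2 : ¬ ¬ (x ∈ Kf j → (f : ℝ → ℝ) x = c (nidx j) * vI j) := fun hneg => h1 ⟨hneg, hx01⟩
    rw [← hnj]
    exact (not_not.mp h2) hxK
  have hgx : (f : ℝ → ℝ) x = g x := by
    have h1 : x ∉ ({x | ¬ ((f : ℝ → ℝ) x = g x)} ∩ Set.Icc a b) := fun h => hxB (Set.mem_union_right _ h)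
    exact not_not.mp (fun hneg => h1 ⟨hneg, hxab⟩)
  have hvj : vI j = (m0 : ℝ) + 1 := by rw [vI, hmj]
  have hgv : |g x| = |c n| * ((m0:ℝ) + 1) := by
    rw [← hgx, hfx, hvj, abs_mul, abs_of_pos (by positivity : (0:ℝ) < (m0:ℝ)+1)]
  have habs : 0 < |c n| := abs_pos.mpr hcn
  have hMlt : M < |c n| * ((m0:ℝ)+1) := by
    have h5 : M < (m0:ℝ) * |c n| := (div_lt_iff₀ habs).mp hm0
    nlinarith
  have h6 := hM x hxab
  rw [hgv] at h6
  linarith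


theorem stmt2 :
    ∃ S : Submodule ℝ (MeasureTheory.Lp ℝ 1 muI),
      IsClosed (S : Set (MeasureTheory.Lp ℝ 1 muI)) ∧
      ¬ FiniteDimensional ℝ S ∧
      ∀ f : MeasureTheory.Lp ℝ 1 muI, f ∈ S → f ≠ 0 →
        ∀ a b : ℝ, 0 ≤ a → a < b → b ≤ 1 →
          ¬ ∃ g : ℝ → ℝ, RiemannIntegrableOn g a b ∧
            (∀ᵐ x ∂(MeasureTheory.volume.restrict (Set.Icc a b)), (f : ℝ → ℝ) x = g x) := by
  refine ⟨Ssub, Scar_closed, Ssub_infdim, ?_⟩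
  intro f hf hf0 a b ha hab hb
  exact Ssub_spikes f hf hf0 a b ha hab hb
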